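/- Swapping equal-length jobs can destroy feasibility under variable consumption: Consider the instance with two machines m₁ ≠ m₂, horizon slots {0, 1, 2}, energy budget E = 4, and two jobs with processing time 2 and machine-independent variable consumption functions u₁ = (4, 1) and u₂ = (1, 4) (job j consumes u_j(τ) in the τ-th slot of its execution, τ ∈ {1, 2}). The schedule placing job 1 on m₁ starting at slot 0 and job 2 on m₂ starting at slot 1 is budget-feasible (its per-slot loads are 4, 2, 4, each at most 4). However, the swapped schedule placing job 2 on m₁ starting at slot 0 and job 1 on m₂ starting at slot 1 is not budget-feasible: its load at slot 1 equals 4 + 4 = 8 > 4. Hence, exchanging two jobs with equal processing times in a feasible schedule can be infeasible when consumption functions are variable. -/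
import Mathlib


/-- Consumption of job `j : Fin 2` in the `τ`-th slot of its execution,
`τ ∈ {1, 2}`: `u₁ = (4, 1)` and `u₂ = (1, 4)` (machine-independent). -/
noncomputable def uSwap : Fin 2 → ℕ → ℝ := fun j τ =>
  if j = 0 then (if τ = 1 then 4 else if τ = 2 then 1 else 0)
  else (if τ = 1 then 1 else if τ = 2 then 4 else 0)

/-- Total consumption at slot `t` of a schedule of two jobs with processing times `p`,
start slots `start` and consumption functions `u` (job `j` started at `start j` is
active at slots `start j, …, start j + p j - 1` and consumes `u j τ` in the `τ`-th
slot of its execution). -/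
noncomputable def loadSwap (u : Fin 2 → ℕ → ℝ) (start p : Fin 2 → ℕ) (t : ℕ) : ℝ :=
  ∑ j, if start j ≤ t ∧ t ≤ start j + p j - 1 then u j (t - start j + 1) else 0

/-- Swapping equal-length jobs can destroy feasibility under variable consumption:
with two machines, horizon `{0, 1, 2}`, budget `E = 4` and two jobs of length `2` with
`u₁ = (4, 1)`, `u₂ = (1, 4)`, the schedule (job 1 on `m₁` at 0, job 2 on `m₂` at 1) is
budget-feasible with per-slot loads `4, 2, 4`, while the swapped schedule
(job 2 on `m₁` at 0, job 1 on `m₂` at 1) has load `4 + 4 = 8 > 4` at slot 1 and is not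
budget-feasible. -/
theorem swap_infeasible_variable_consumption
    (p : Fin 2 → ℕ) (hp : p = fun _ => 2)
    (mach : Fin 2 → Fin 2) (start : Fin 2 → ℕ)
    (hmach : mach = ![0, 1]) (hstart : start = ![0, 1])
    (mach' : Fin 2 → Fin 2) (start' : Fin 2 → ℕ)
    (hmach' : mach' = ![1, 0]) (hstart' : start' = ![1, 0]) :
    -- the original schedule fits the horizon {0, 1, 2} and is budget-feasible
    (∀ j, start j + p j - 1 ≤ 2) ∧
    (∀ j₁ j₂, j₁ ≠ j₂ → mach j₁ = mach j₂ → ∀ t : ℕ,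
      ¬((start j₁ ≤ t ∧ t ≤ start j₁ + p j₁ - 1) ∧
        (start j₂ ≤ t ∧ t ≤ start j₂ + p j₂ - 1))) ∧
    loadSwap uSwap start p 0 = 4 ∧
    loadSwap uSwap start p 1 = 2 ∧
    loadSwap uSwap start p 2 = 4 ∧
    (∀ t : ℕ, loadSwap uSwap start p t ≤ 4) ∧
    -- the swapped schedule fits the horizon and has no machine conflict, but
    -- exceeds the energy budget at slot 1
    (∀ j, start' j + p j - 1 ≤ 2) ∧
    (∀ j₁ j₂, j₁ ≠ j₂ → mach' j₁ = mach' j₂ → ∀ t : ℕ,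
      ¬((start' j₁ ≤ t ∧ t ≤ start' j₁ + p j₁ - 1) ∧
        (start' j₂ ≤ t ∧ t ≤ start' j₂ + p j₂ - 1))) ∧
    loadSwap uSwap start' p 1 = 8 ∧
    ¬(∀ t : ℕ, loadSwap uSwap start' p t ≤ 4) := by
  subst hp hmach hstart hmach' hstart'
  refine ⟨?_, ?_, ?_, ?_, ?_, ?_, ?_, ?_, ?_, ?_⟩
  · intro j; fin_cases j <;> simp
  · intro j₁ j₂ hne hm; fin_cases j₁ <;> fin_cases j₂ <;> simp_all
  · simp [loadSwap, uSwap, Fin.sum_univ_two]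
  · simp [loadSwap, uSwap, Fin.sum_univ_two]; norm_num
  · simp [loadSwap, uSwap, Fin.sum_univ_two]
  · intro t
    match t with
    | 0 => simp [loadSwap, uSwap, Fin.sum_univ_two]
    | 1 => simp [loadSwap, uSwap, Fin.sum_univ_two]; norm_num
    | 2 => simp [loadSwap, uSwap, Fin.sum_univ_two]
    | (n+3) => simp [loadSwap, uSwap, Fin.sum_univ_two]
  · intro j; fin_cases j <;> simp
  · intro j₁ j₂ hne hm; fin_cases j₁ <;> fin_cases j₂ <;> simp_all
  · simp [loadSwap, uSwap, Fin.sum_univ_two]; norm_num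
  · intro h
    have := h 1
    simp [loadSwap, uSwap, Fin.sum_univ_two] at this
    norm_num at this
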